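/- Let L = (T_1,…,T_ℓ,S) be a tuple as in the setting satisfying the explicit conditions (H), (H'), (S), (T1), (T2), (G). If the right column of T_i is nonempty (so the fin of T_i exists), then the fin of T_i is an even number; moreover, if i < ℓ, then the right column of T_{i+1} is also nonempty and fin(T_i) ≤ fin(T_{i+1}). -/

import Mathlib

namespace OrthoBij

/-- `lev s i = #i(s) - #(-i)(s)` as an integer. -/
def lev (s : List ℤ) (i : ℤ) : ℤ := (s.count i : ℤ) - (s.count (-i) : ℤ)

/-- A vacillating tableau of dimension `k`: a word with letters in `{-k,…,k}` such that
every prefix satisfies the three conditions. -/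
def IsVacillating (k : ℕ) (w : List ℤ) : Prop :=
  (∀ a ∈ w, -(k : ℤ) ≤ a ∧ a ≤ (k : ℤ)) ∧
  ∀ s : List ℤ, s <+: w →
    (∀ i : ℤ, 1 ≤ i → i ≤ (k : ℤ) → 0 ≤ lev s i) ∧
    (∀ i : ℤ, 1 ≤ i → i + 1 ≤ (k : ℤ) → lev s (i + 1) ≤ lev s i) ∧
    (s.getLast? = some 0 → 0 < lev s (k : ℤ))

/-- The shape of the vacillating tableau is the empty partition. -/
def EmptyShape (k : ℕ) (w : List ℤ) : Prop :=
  ∀ i : ℤ, 1 ≤ i → i ≤ (k : ℤ) → lev w i = 0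

/-- Membership in `W(k,r)`: vacillating tableaux of dimension `k`, length `r`, shape `∅`. -/
def WMem (k r : ℕ) (w : List ℤ) : Prop :=
  IsVacillating k w ∧ w.length = r ∧ EmptyShape k w

/-- A filling of a Young diagram. -/
structure Tableau where
  shape : YoungDiagram
  entry : ℕ → ℕ → ℕ

/-- A standard Young tableau: an injective filling of the diagram with the numbers
`1,…,card`, strictly increasing along rows and columns, zero outside the diagram. -/
def IsSYT (Q : Tableau) : Prop :=
  (∀ i j, (i, j) ∉ Q.shape → Q.entry i j = 0) ∧
  (∀ i j, (i, j) ∈ Q.shape → 1 ≤ Q.entry i j ∧ Q.entry i j ≤ Q.shape.card) ∧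
  (∀ i j i' j', (i, j) ∈ Q.shape → (i', j') ∈ Q.shape →
      Q.entry i j = Q.entry i' j' → (i, j) = (i', j')) ∧
  (∀ i j₁ j₂, j₁ < j₂ → (i, j₂) ∈ Q.shape → Q.entry i j₁ < Q.entry i j₂) ∧
  (∀ i₁ i₂ j, i₁ < i₂ → (i₂, j) ∈ Q.shape → Q.entry i₁ j < Q.entry i₂ j)

/-- The shape has at most `2k+1` rows, all of even length. -/
def EvenRows (k : ℕ) (Q : Tableau) : Prop :=
  (∀ i, 2 * k + 1 ≤ i → Q.shape.rowLen i = 0) ∧ ∀ i, Even (Q.shape.rowLen i)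

/-- Membership in `E(k,r)`: standard Young tableaux with `r` entries whose shape has at
most `2k+1` rows, all of even length. -/
def EMem (k r : ℕ) (Q : Tableau) : Prop :=
  IsSYT Q ∧ Q.shape.card = r ∧ EvenRows k Q

/-- A partition, as a weakly decreasing list of positive integers. -/
def IsPartitionL (μ : List ℕ) : Prop :=
  μ.Pairwise (· ≥ ·) ∧ ∀ x ∈ μ, 0 < x

end OrthoBij

namespace OrthoBij

/-- A two-column skew tableau: inner-shape parameter `a`, right-column length `b`,
left column `left` and right column `right`, both listed from top to bottom.
The left column occupies rows `a, a+1, …` and the right column rows `0, 1, …, b-1`. -/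
structure TwoCol where
  a : ℕ
  b : ℕ
  left : List ℕ
  right : List ℕ

instance : Inhabited TwoCol := ⟨⟨0, 0, [], []⟩⟩

/-- The `i`-th entry of a column, counted from the bottom (`1`-based). -/
def botGet (c : List ℕ) (i : ℕ) : ℕ := c.getD (c.length - i) 0

/-- Row-semistandardness of `T` after sliding the right column down by `s` rows:
whenever the right cell number `t` (now in row `s + t`) has a left neighbour, the left
neighbour is not larger. -/
def SlidOK (T : TwoCol) (s : ℕ) : Prop :=
  ∀ t, t < T.right.length → T.a ≤ s + t → s + t - T.a < T.left.length →
    T.left.getD (s + t - T.a) 0 ≤ T.right.getD t 0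

/-- The residuum of `T` (with tail length `m`): the maximal number of positions the
right column can be slid down while keeping a semistandard skew tableau. -/
noncomputable def residuum (T : TwoCol) (m : ℕ) : ℕ :=
  sSup {s | s ≤ min T.a m ∧ SlidOK T s}

/-- `T` is a valid two-column skew semistandard tableau of shape
`(2^b, 1^m)/(1^a)` with `b ≥ a ≥ 0` both even and residuum at most `1`. -/
def IsTwoCol (m : ℕ) (T : TwoCol) : Prop :=
  Even T.a ∧ Even T.b ∧ T.a ≤ T.b ∧
  T.left.length = T.b - T.a + m ∧ T.right.length = T.b ∧
  (∀ x ∈ T.left, 0 < x) ∧ (∀ x ∈ T.right, 0 < x) ∧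
  T.left.Pairwise (· < ·) ∧ T.right.Pairwise (· < ·) ∧
  SlidOK T 0 ∧ residuum T m ≤ 1

/-- The tail of `T`: the bottom `m` entries of the left column. -/
def tailOf (T : TwoCol) : List ℕ := T.left.drop (T.b - T.a)

/-- The tail root of `T`: the topmost tail entry. -/
def tailRoot (T : TwoCol) : ℕ := T.left.getD (T.b - T.a) 0

/-- The lower tail of `T`: the tail without the tail root. -/
def lowerTail (T : TwoCol) : List ℕ := T.left.drop (T.b - T.a + 1)

/-- The fin of `T`: the largest (bottom) entry of the right column. -/
def finOf (T : TwoCol) : ℕ := botGet T.right 1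

/-- `x` occurs as a gap in the (strictly increasing) column `col`. -/
def IsGapIn (col : List ℕ) (x : ℕ) : Prop := x ∈ col ∧ 1 < x ∧ (x - 1) ∉ col

/-- `x` occurs as a slot in the column `col`. -/
def IsSlotIn (col : List ℕ) (x : ℕ) : Prop := x ∈ col ∧ (x + 1) ∉ col

/-- `T` is of type 1: residuum `0` and all gaps lie in the tail. -/
def Type1 (m : ℕ) (T : TwoCol) : Prop :=
  residuum T m = 0 ∧ (∀ x, ¬ IsGapIn T.right x) ∧
  ∀ x, IsGapIn T.left x → x ∈ tailOf T

/-- `T` is of type 2: residuum `1` and all gaps lie in the lower tail. -/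
def Type2 (m : ℕ) (T : TwoCol) : Prop :=
  residuum T m = 1 ∧ (∀ x, ¬ IsGapIn T.right x) ∧
  ∀ x, IsGapIn T.left x → x ∈ lowerTail T

/-- `T` is of type 3: residuum `1`, the fin is a gap, and all other gaps lie in the
lower tail. -/
def Type3 (m : ℕ) (T : TwoCol) : Prop :=
  residuum T m = 1 ∧ IsGapIn T.right (finOf T) ∧
  (∀ x, IsGapIn T.right x → x = finOf T) ∧
  ∀ x, IsGapIn T.left x → x ∈ lowerTail T

/-- A skew semistandard tableau of rectangular outer shape, recorded by its columns
(from left to right, each from top to bottom, bottom-aligned in the rectangle). -/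
structure RectCols where
  cols : List (List ℕ)

/-- Validity of such a tableau with `c` columns, all of the same length parity. -/
def IsRect (c : ℕ) (S : RectCols) : Prop :=
  S.cols.length = c ∧
  (∀ col ∈ S.cols, col.Pairwise (· < ·) ∧ ∀ x ∈ col, 0 < x) ∧
  (∀ t, t + 1 < c → (S.cols.getD t []).length ≤ (S.cols.getD (t + 1) []).length) ∧
  (∀ t u, t < c → u < c →
      (S.cols.getD t []).length % 2 = (S.cols.getD u []).length % 2) ∧
  (∀ t i, t + 1 < c → 1 ≤ i → i ≤ (S.cols.getD t []).length →
      botGet (S.cols.getD t []) i ≤ botGet (S.cols.getD (t + 1) []) i)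

/-- The leftmost column `S^L` of `S`. -/
def SL (S : RectCols) : List ℕ := S.cols.getD 0 []

/-- `S` is even: its columns have even length. -/
def SEven (S : RectCols) : Prop := (SL S).length % 2 = 0

/-- A tuple `L = (T₁, …, T_ℓ, S)`. -/
structure KTupleData where
  Ts : List TwoCol
  S : RectCols

/-- The `j`-th two-column tableau of the tuple (`0`-based). -/
def TAt (d : KTupleData) (j : ℕ) : TwoCol := d.Ts.getD j default

/-- The residuum `r_j` of the `j`-th tableau. -/
noncomputable def resAt (μ : List ℕ) (d : KTupleData) (j : ℕ) : ℕ :=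
  residuum (TAt d j) (μ.getD j 0)

/-- Structural validity of the tuple for `SO(2k+1)` and the partition `μ`. -/
def IsKTuple (k : ℕ) (μ : List ℕ) (d : KTupleData) : Prop :=
  d.Ts.length = μ.length ∧
  (∀ j, j < μ.length → IsTwoCol (μ.getD j 0) (TAt d j)) ∧
  IsRect (2 * k + 1 - 2 * μ.length) d.S

/-- All columns of the tuple, ordered from left to right. -/
def colListOf (d : KTupleData) : List (List ℕ) :=
  (d.Ts.map (fun T => [T.left, T.right])).flatten ++ d.S.cols

/-- Condition (H). -/
noncomputable def CondH (μ : List ℕ) (d : KTupleData) : Prop :=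
  ∀ i, i + 1 < μ.length →
    (TAt d i).b ≤ (TAt d (i + 1)).b - (TAt d (i + 1)).a +
      2 * resAt μ d i * resAt μ d (i + 1)

/-- Condition (H'). -/
noncomputable def CondH' (μ : List ℕ) (d : KTupleData) : Prop :=
  0 < μ.length →
    (SEven d.S → (TAt d (μ.length - 1)).b ≤ (SL d.S).length) ∧
    (¬ SEven d.S →
      (TAt d (μ.length - 1)).b ≤ (SL d.S).length - 1 + 2 * resAt μ d (μ.length - 1))

/-- Condition (S): `S` contains no gap. -/
def CondS (d : KTupleData) : Prop :=
  ∀ col ∈ d.S.cols, ∀ x, ¬ IsGapIn col x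

/-- Condition (T1) without its final (tail-root) clause. -/
noncomputable def CondT1noTR (μ : List ℕ) (d : KTupleData) : Prop :=
  (∀ i, i < μ.length →
      Type1 (μ.getD i 0) (TAt d i) ∨ Type2 (μ.getD i 0) (TAt d i) ∨
        Type3 (μ.getD i 0) (TAt d i)) ∧
  (∀ i, i + 1 < μ.length → Type3 (μ.getD i 0) (TAt d i) →
      resAt μ d (i + 1) = 1 ∧ finOf (TAt d i) ≤ finOf (TAt d (i + 1))) ∧
  (0 < μ.length → Type3 (μ.getD (μ.length - 1) 0) (TAt d (μ.length - 1)) →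
      ¬ SEven d.S)

/-- The tail-root clause of condition (T1). -/
noncomputable def CondT1TR (μ : List ℕ) (d : KTupleData) : Prop :=
  0 < μ.length → Type1 (μ.getD (μ.length - 1) 0) (TAt d (μ.length - 1)) →
    ¬ SEven d.S → tailRoot (TAt d (μ.length - 1)) ≤ botGet (SL d.S) 1

/-- Condition (T1). -/
noncomputable def CondT1 (μ : List ℕ) (d : KTupleData) : Prop :=
  CondT1noTR μ d ∧ CondT1TR μ d

/-- Condition (T2): the tails, placed side by side with tops aligned, form a
semistandard Young tableau. -/
def CondT2 (μ : List ℕ) (d : KTupleData) : Prop :=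
  ∀ i t, i + 1 < μ.length → t < (tailOf (TAt d (i + 1))).length →
    (tailOf (TAt d i)).getD t 0 ≤ (tailOf (TAt d (i + 1))).getD t 0

/-- Condition (G): for every value `x` there is an injection from the occurrences of
`x` as a gap to the occurrences of `x - 1` as a slot, each gap being assigned a slot
occurrence in a column strictly to its right. -/
def CondG (d : KTupleData) : Prop :=
  ∀ x : ℕ,
    ∃ f : {c : ℕ // c < (colListOf d).length ∧ IsGapIn ((colListOf d).getD c []) x} →
        {c : ℕ // c < (colListOf d).length ∧ IsSlotIn ((colListOf d).getD c []) (x - 1)},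
      Function.Injective f ∧
        ∀ c : {c : ℕ // c < (colListOf d).length ∧
            IsGapIn ((colListOf d).getD c []) x}, c.val < (f c).val

/-- `L` has content `λ`: the letter `x` occurs exactly `λ'_x` times altogether, where
`λ'` is the conjugate partition. -/
def CondContent (lam : List ℕ) (d : KTupleData) : Prop :=
  ∀ x : ℕ, 1 ≤ x →
    ((colListOf d).map (fun col => col.count x)).sum =
      lam.countP (fun y => decide (x ≤ y))

end OrthoBij

/-! Tableaux of types 1 and 2 have the gap-free right column `1, …, b`, so their fin is the
even number `b`. For type 3 the fin `f` is a gap, and (G) provides a slot `f - 1` in some column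
further right. A strictly increasing column whose gaps all lie below a certain row begins with
`1, 2, 3, …` down to that row, and a slot in this initial run sits at its end. In each possible
column (left or right column of a later `T_j`, or a column of `S`) the run has even length, which
makes `f` even, unless this contradicts the monotonicity of the fins along the tuple that (H)
provides; for a column of `S` the parity comes from `S` being odd, forced by (H'). -/

namespace OrthoBij

section Column

variable {L : List ℕ}

def GapsFrom (L : List ℕ) (N : ℕ) : Prop := ∀ x, IsGapIn L x → x ∈ L.drop N

theorem getD_mem_of_lt {α : Type*} {l : List α} {d : α} {p : ℕ} (hp : p < l.length) :
    l.getD p d ∈ l := by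
  rw [List.getD_eq_getElem _ _ hp]
  exact List.getElem_mem hp

theorem getD_mem_drop {N p : ℕ} (hN : N ≤ p) (hp : p < L.length) : L.getD p 0 ∈ L.drop N := by
  rw [List.getD_eq_getElem _ _ hp, List.mem_iff_getElem]
  refine ⟨p - N, by simp only [List.length_drop]; omega, ?_⟩
  simp only [List.getElem_drop]
  congr 1
  omega

theorem exists_getD_eq_of_mem {x : ℕ} (hx : x ∈ L) : ∃ p < L.length, L.getD p 0 = x := by
  obtain ⟨p, hp, rfl⟩ := List.mem_iff_getElem.mp hx
  exact ⟨p, hp, List.getD_eq_getElem _ _ hp⟩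

theorem exists_getD_eq_of_mem_drop {x N : ℕ} (hx : x ∈ L.drop N) :
    ∃ p, N ≤ p ∧ p < L.length ∧ L.getD p 0 = x := by
  obtain ⟨p, hp, rfl⟩ := List.mem_iff_getElem.mp hx
  simp only [List.length_drop] at hp
  refine ⟨N + p, by omega, by omega, ?_⟩
  rw [List.getD_eq_getElem _ _ (by omega), List.getElem_drop]

theorem getD_lt_getD_of_pairwise (hL : L.Pairwise (· < ·)) {p q : ℕ} (hpq : p < q)
    (hq : q < L.length) : L.getD p 0 < L.getD q 0 := by
  rw [List.getD_eq_getElem _ _ (hpq.trans hq), List.getD_eq_getElem _ _ hq]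
  exact List.pairwise_iff_getElem.mp hL p q _ _ hpq

theorem succ_le_getD (hL : L.Pairwise (· < ·)) (hpos : ∀ x ∈ L, 0 < x) {p : ℕ}
    (hp : p < L.length) : p + 1 ≤ L.getD p 0 := by
  induction p with
  | zero => exact hpos _ (getD_mem_of_lt hp)
  | succ p ih =>
    have := getD_lt_getD_of_pairwise hL (Nat.lt_add_one p) hp
    have := ih (by omega)
    omega

theorem getD_eq_succ_of_gapsFrom (hL : L.Pairwise (· < ·)) (hpos : ∀ x ∈ L, 0 < x) {N : ℕ}
    (hg : GapsFrom L N) {p : ℕ} (hpN : p < N) (hp : p < L.length) : L.getD p 0 = p + 1 := by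
  induction p using Nat.strong_induction_on with
  | _ p ih =>
  have hge := succ_le_getD hL hpos hp
  by_contra hne
  have hprev : L.getD p 0 - 1 ∉ L := by
    intro hmem
    obtain ⟨q, hq, hqv⟩ := exists_getD_eq_of_mem hmem
    rcases Nat.lt_trichotomy q p with hqp | rfl | hqp
    · have := ih q hqp (by omega) hq
      omega
    · omega
    · have := getD_lt_getD_of_pairwise hL hqp hq
      omega
  obtain ⟨q, hNq, hq, hqv⟩ :=
    exists_getD_eq_of_mem_drop (hg _ ⟨getD_mem_of_lt hp, by omega, hprev⟩)
  have := getD_lt_getD_of_pairwise hL (show p < q by omega) hq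
  omega

theorem mem_of_gapsFrom (hL : L.Pairwise (· < ·)) (hpos : ∀ x ∈ L, 0 < x) {N : ℕ}
    (hg : GapsFrom L N) {x : ℕ} (hx : 1 ≤ x) (hxN : x ≤ N) (hxL : x ≤ L.length) : x ∈ L := by
  have := getD_eq_succ_of_gapsFrom hL hpos hg (p := x - 1) (by omega) (by omega)
  rw [show x = L.getD (x - 1) 0 by omega]
  exact getD_mem_of_lt (by omega)

theorem IsSlotIn.eq_min_or_mem_drop (hL : L.Pairwise (· < ·)) (hpos : ∀ x ∈ L, 0 < x)
    {N : ℕ} (hg : GapsFrom L N) {x : ℕ} (hx : IsSlotIn L x) :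
    x = min N L.length ∨ x ∈ L.drop N := by
  obtain ⟨p, hp, rfl⟩ := exists_getD_eq_of_mem hx.1
  rcases Nat.lt_or_ge p N with hpN | hpN
  · have hv := getD_eq_succ_of_gapsFrom hL hpos hg hpN hp
    left
    by_contra hne
    exact hx.2 (mem_of_gapsFrom hL hpos hg (by omega) (by omega) (by omega))
  · exact Or.inr (getD_mem_drop hpN hp)

theorem botGet_one_eq_length (hL : L.Pairwise (· < ·)) (hpos : ∀ x ∈ L, 0 < x)
    (hg : ∀ x, ¬ IsGapIn L x) : botGet L 1 = L.length := by
  by_cases hnil : L = []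
  · subst hnil
    rfl
  have hlen := List.length_pos_iff.mpr hnil
  exact (getD_eq_succ_of_gapsFrom hL hpos (N := L.length) (fun x hx => absurd hx (hg x))
    (by omega) (by omega)).trans (by omega)

theorem gapsFrom_length_sub_one (hg : ∀ x, IsGapIn L x → x = botGet L 1) :
    GapsFrom L (L.length - 1) := by
  intro x hx
  have := List.length_pos_of_mem hx.1
  rw [hg x hx]
  exact getD_mem_drop le_rfl (by omega)

theorem eq_botGet_one_of_mem_drop {x : ℕ} (hx : x ∈ L.drop (L.length - 1)) : x = botGet L 1 := by
  obtain ⟨p, hp, hpL, rfl⟩ := exists_getD_eq_of_mem_drop hx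
  rw [show p = L.length - 1 by omega]
  rfl

theorem length_lt_botGet_one (hL : L.Pairwise (· < ·)) (hpos : ∀ x ∈ L, 0 < x)
    (hgap : IsGapIn L (botGet L 1)) (hg : ∀ x, IsGapIn L x → x = botGet L 1) :
    L.length < botGet L 1 := by
  have hlen := List.length_pos_of_mem hgap.1
  have hge := succ_le_getD hL hpos (p := L.length - 1) (by omega)
  obtain ⟨-, hgt1, hprev⟩ := hgap
  unfold botGet at hgt1 hprev ⊢
  rcases Nat.lt_or_ge 1 L.length with h2 | h1
  · have := getD_eq_succ_of_gapsFrom hL hpos (gapsFrom_length_sub_one hg)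
      (p := L.length - 2) (by omega) (by omega)
    by_contra hle
    exact hprev (by rw [show L.getD (L.length - 1) 0 - 1 = L.getD (L.length - 2) 0 by omega]
                    exact getD_mem_of_lt (by omega))
  · omega

end Column

section TwoColumn

variable {m : ℕ} {T : TwoCol}

theorem residuum_le_min (h0 : SlidOK T 0) : residuum T m ≤ min T.a m :=
  csSup_le ⟨0, Nat.zero_le _, h0⟩ fun _ hs => hs.1

theorem le_residuum {s : ℕ} (hs : s ≤ min T.a m) (hslid : SlidOK T s) : s ≤ residuum T m :=
  le_csSup ⟨min T.a m, fun _ h => h.1⟩ ⟨hs, hslid⟩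

theorem right_ne_nil_of_finOf_pos (h : 0 < finOf T) : T.right ≠ [] := by
  rintro hnil
  simp [finOf, botGet, hnil] at h

theorem right_gapFree_or_type3 (hty : Type1 m T ∨ Type2 m T ∨ Type3 m T) :
    (∀ x, ¬ IsGapIn T.right x) ∨ Type3 m T := by
  rcases hty with h | h | h
  exacts [Or.inl h.2.1, Or.inl h.2.1, Or.inr h]

theorem IsTwoCol.two_le_a_of_residuum_eq_one (hT : IsTwoCol m T) (hr : residuum T m = 1) :
    2 ≤ T.a ∧ 1 ≤ m := by
  obtain ⟨⟨c, hc⟩, -, -, -, -, -, -, -, -, h0, -⟩ := hT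
  have := residuum_le_min (m := m) h0
  omega

theorem IsTwoCol.finOf_pos (hT : IsTwoCol m T) (hne : T.right ≠ []) : 0 < finOf T :=
  hT.2.2.2.2.2.2.1 _ (getD_mem_of_lt (by have := List.length_pos_iff.mpr hne; omega))

theorem IsTwoCol.finOf_eq_b (hT : IsTwoCol m T) (hg : ∀ x, ¬ IsGapIn T.right x) :
    finOf T = T.b := by
  obtain ⟨-, -, -, -, hlenR, -, hposR, -, hsortR, -, -⟩ := hT
  rw [finOf, botGet_one_eq_length hsortR hposR hg, hlenR]

theorem IsTwoCol.b_lt_finOf (hT : IsTwoCol m T) (h3 : Type3 m T) : T.b < finOf T := by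
  obtain ⟨-, -, -, -, hlenR, -, hposR, -, hsortR, -, -⟩ := hT
  rw [← hlenR]
  exact length_lt_botGet_one hsortR hposR h3.2.1 h3.2.2.1

/-- Residuum `1` forbids sliding the right column down by two rows; the only cell that can
block this slide is the fin, which then lies below the top of the lower tail. -/
theorem IsTwoCol.finOf_lt_of_mem_lowerTail (hT : IsTwoCol m T) (hr : residuum T m = 1)
    (hgL : GapsFrom T.left (T.b - T.a + 1)) (hgR : ∀ x, IsGapIn T.right x → x = finOf T)
    {x : ℕ} (hx : x ∈ lowerTail T) : finOf T < x := by
  have ha := (hT.two_le_a_of_residuum_eq_one hr).1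
  obtain ⟨-, -, hab, hlenL, hlenR, hposL, hposR, hsortL, hsortR, -, -⟩ := hT
  obtain ⟨p, hp, hpL, rfl⟩ := exists_getD_eq_of_mem_drop hx
  have hslid : ¬ SlidOK T 2 := fun h2 => by
    have := le_residuum (m := m) (Nat.le_min.mpr ⟨ha, by omega⟩) h2
    omega
  simp only [SlidOK, not_forall, not_le] at hslid
  obtain ⟨t, ht, -, htL, hblock⟩ := hslid
  have hgR' := gapsFrom_length_sub_one hgR
  have htb : t = T.b - 1 := by
    by_contra hne
    have := getD_eq_succ_of_gapsFrom hsortR hposR hgR' (p := t) (by omega) ht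
    have := getD_eq_succ_of_gapsFrom hsortL hposL hgL (p := 2 + t - T.a) (by omega) htL
    omega
  have hfin : T.right.getD t 0 = finOf T := by
    rw [finOf, botGet, hlenR, htb]
  rcases Nat.eq_or_lt_of_le (show 2 + t - T.a ≤ p by omega) with heq | hlt
  · rw [heq] at hblock
    omega
  · have := getD_lt_getD_of_pairwise hsortL hlt hpL
    omega

theorem IsTwoCol.b_sub_a_add_two_mul_residuum_le_finOf (hT : IsTwoCol m T)
    (hty : Type1 m T ∨ Type2 m T ∨ Type3 m T) : T.b - T.a + 2 * residuum T m ≤ finOf T := by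
  have hab := hT.2.2.1
  rcases hty with h | h | h
  · rw [h.1, hT.finOf_eq_b h.2.1]
    omega
  · have := (hT.two_le_a_of_residuum_eq_one h.1).1
    rw [h.1, hT.finOf_eq_b h.2.1]
    omega
  · have := (hT.two_le_a_of_residuum_eq_one h.1).1
    have := hT.b_lt_finOf h
    rw [h.1]
    omega

end TwoColumn

section ColumnList

theorem length_flatten_map_columns (Ts : List TwoCol) :
    (Ts.map fun T => [T.left, T.right]).flatten.length = 2 * Ts.length := by
  induction Ts with
  | nil => rfl
  | cons T Ts ih =>
    simp only [List.map_cons, List.flatten_cons, List.length_append, ih, List.length_cons,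
      List.length_nil]
    omega

theorem getD_flatten_map_columns (Ts : List TwoCol) {j : ℕ} (hj : j < Ts.length) :
    (Ts.map fun T => [T.left, T.right]).flatten.getD (2 * j) [] = (Ts.getD j default).left ∧
      (Ts.map fun T => [T.left, T.right]).flatten.getD (2 * j + 1) [] =
        (Ts.getD j default).right := by
  induction Ts generalizing j with
  | nil => simp at hj
  | cons T Ts ih =>
    cases j with
    | zero => simp
    | succ j =>
      rw [show 2 * (j + 1) = 2 * j + 1 + 1 by omega]
      simpa using ih (by simpa using hj)

variable (d : KTupleData)

theorem length_colListOf : (colListOf d).length = 2 * d.Ts.length + d.S.cols.length := by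
  rw [colListOf, List.length_append, length_flatten_map_columns]

theorem colListOf_getD_left {j : ℕ} (hj : j < d.Ts.length) :
    (colListOf d).getD (2 * j) [] = (TAt d j).left := by
  rw [colListOf, List.getD_append _ _ _ _ (by rw [length_flatten_map_columns]; omega)]
  exact (getD_flatten_map_columns d.Ts hj).1

theorem colListOf_getD_right {j : ℕ} (hj : j < d.Ts.length) :
    (colListOf d).getD (2 * j + 1) [] = (TAt d j).right := by
  rw [colListOf, List.getD_append _ _ _ _ (by rw [length_flatten_map_columns]; omega)]
  exact (getD_flatten_map_columns d.Ts hj).2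

theorem colListOf_getD_S (t : ℕ) :
    (colListOf d).getD (2 * d.Ts.length + t) [] = d.S.cols.getD t [] := by
  rw [colListOf, List.getD_append_right _ _ _ _ (by rw [length_flatten_map_columns]; omega),
    length_flatten_map_columns, Nat.add_sub_cancel_left]

theorem colListOf_cases {c : ℕ} (hc : c < (colListOf d).length) :
    (∃ j < d.Ts.length, c = 2 * j ∧ (colListOf d).getD c [] = (TAt d j).left) ∨
    (∃ j < d.Ts.length, c = 2 * j + 1 ∧ (colListOf d).getD c [] = (TAt d j).right) ∨
    (∃ t < d.S.cols.length, c = 2 * d.Ts.length + t ∧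
      (colListOf d).getD c [] = d.S.cols.getD t []) := by
  rw [length_colListOf] at hc
  rcases Nat.lt_or_ge c (2 * d.Ts.length) with hT | hS
  · rcases Nat.even_or_odd' c with ⟨j, rfl | rfl⟩
    · exact Or.inl ⟨j, by omega, rfl, colListOf_getD_left d (by omega)⟩
    · exact Or.inr (Or.inl ⟨j, by omega, rfl, colListOf_getD_right d (by omega)⟩)
  · obtain ⟨t, rfl⟩ := Nat.exists_eq_add_of_le hS
    exact Or.inr (Or.inr ⟨t, by omega, rfl, colListOf_getD_S d t⟩)

end ColumnList

theorem IsRect.length_SL_le {c : ℕ} {S : RectCols} (hR : IsRect c S) {t : ℕ} (ht : t < c) :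
    (SL S).length ≤ (S.cols.getD t []).length := by
  induction t with
  | zero => exact le_rfl
  | succ t ih => exact (ih (by omega)).trans (hR.2.2.1 t ht)

section Tuple

variable {μ : List ℕ} {d : KTupleData}

theorem finOf_le_finOf_succ (hTs : ∀ j, j < μ.length → IsTwoCol (μ.getD j 0) (TAt d j))
    (hH : CondH μ d) (hT1 : CondT1noTR μ d) {i : ℕ} (hi : i + 1 < μ.length) :
    finOf (TAt d i) ≤ finOf (TAt d (i + 1)) := by
  have hnext := (hTs (i + 1) hi).b_sub_a_add_two_mul_residuum_le_finOf (hT1.1 (i + 1) hi)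
  have hHi := hH i hi
  have hri : resAt μ d i ≤ 1 := (hTs i (by omega)).2.2.2.2.2.2.2.2.2.2
  have hprod : 2 * resAt μ d i * resAt μ d (i + 1) ≤ 2 * resAt μ d (i + 1) := by nlinarith
  unfold resAt at hprod hHi
  rcases right_gapFree_or_type3 (hT1.1 i (by omega)) with h | h
  · rw [(hTs i (by omega)).finOf_eq_b h]
    omega
  · exact (hT1.2.1 i hi h).2

theorem finOf_mono (hTs : ∀ j, j < μ.length → IsTwoCol (μ.getD j 0) (TAt d j))
    (hH : CondH μ d) (hT1 : CondT1noTR μ d) {i j : ℕ} (hij : i ≤ j) (hj : j < μ.length) :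
    finOf (TAt d i) ≤ finOf (TAt d j) := by
  induction j, hij using Nat.le_induction with
  | base => exact le_rfl
  | succ j _ ih => exact (ih (by omega)).trans (finOf_le_finOf_succ hTs hH hT1 hj)

theorem even_finOf_of_isSlotIn_left (hTs : ∀ j, j < μ.length → IsTwoCol (μ.getD j 0) (TAt d j))
    (hH : CondH μ d) (hT1 : CondT1noTR μ d) {i j : ℕ} (hij : i < j) (hj : j < μ.length)
    (h3 : Type3 (μ.getD i 0) (TAt d i))
    (hslot : IsSlotIn (TAt d j).left (finOf (TAt d i) - 1)) : Even (finOf (TAt d i)) := by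
  have hf := (hTs i (by omega)).b_lt_finOf h3
  have hfj := finOf_mono hTs hH hT1 hij.le hj
  obtain ⟨⟨ca, hca⟩, ⟨cb, hcb⟩, hab, hlenL, -, hposL, -, hsortL, -, -, -⟩ := hTs j hj
  have hnext : finOf (TAt d i) ∉ (TAt d j).left := by
    simpa only [IsSlotIn, Nat.sub_add_cancel (show 1 ≤ finOf (TAt d i) by omega)] using hslot.2
  rcases hT1.1 j hj with h1 | h23
  · -- `r_j = 0` rules out type 3 for `T_{j-1}`, so (H) gives `f ≤ b_{j-1} ≤ b_j - a_j`:
    -- then `f` lies in the gap-free top part of the left column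
    have hj' : j - 1 + 1 = j := by omega
    have hprev : ¬ Type3 (μ.getD (j - 1) 0) (TAt d (j - 1)) := fun h => by
      have := (hT1.2.1 (j - 1) (by omega) h).1
      rw [hj'] at this
      exact absurd (h1.1.symm.trans this) zero_ne_one
    have hfprev : finOf (TAt d (j - 1)) = (TAt d (j - 1)).b :=
      (hTs (j - 1) (by omega)).finOf_eq_b
        ((right_gapFree_or_type3 (hT1.1 (j - 1) (by omega))).resolve_right hprev)
    have hHj := hH (j - 1) (by omega)
    rw [hj'] at hHj
    unfold resAt at hHj
    rw [h1.1, Nat.mul_zero, Nat.add_zero] at hHj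
    have := finOf_mono hTs hH hT1 (show i ≤ j - 1 by omega) (by omega)
    exact absurd (mem_of_gapsFrom hsortL hposL h1.2.2 (by omega) (by omega) (by omega)) hnext
  · obtain ⟨hr, hgL, hgR⟩ : residuum (TAt d j) (μ.getD j 0) = 1 ∧
        GapsFrom (TAt d j).left ((TAt d j).b - (TAt d j).a + 1) ∧
        ∀ x, IsGapIn (TAt d j).right x → x = finOf (TAt d j) := by
      rcases h23 with h | h
      · exact ⟨h.1, h.2.2, fun x hx => absurd hx (h.2.1 x)⟩
      · exact ⟨h.1, h.2.2.2, h.2.2.1⟩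
    have hm := (hTs j hj |>.two_le_a_of_residuum_eq_one hr).2
    rcases hslot.eq_min_or_mem_drop hsortL hposL hgL with h | h
    · exact ⟨cb - ca + 1, by omega⟩
    · have := (hTs j hj).finOf_lt_of_mem_lowerTail hr hgL hgR h
      omega

theorem even_finOf_of_isSlotIn_right (hTs : ∀ j, j < μ.length → IsTwoCol (μ.getD j 0) (TAt d j))
    (hH : CondH μ d) (hT1 : CondT1noTR μ d) {i j : ℕ} (hij : i < j) (hj : j < μ.length)
    (h3 : Type3 (μ.getD i 0) (TAt d i))
    (hslot : IsSlotIn (TAt d j).right (finOf (TAt d i) - 1)) : Even (finOf (TAt d i)) := by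
  have hf := (hTs i (by omega)).b_lt_finOf h3
  have hfj := finOf_mono hTs hH hT1 hij.le hj
  have hTj := hTs j hj
  obtain ⟨-, hbe, -, -, hlenR, -, hposR, -, hsortR, -, -⟩ := hTs j hj
  have hnext : finOf (TAt d i) ∉ (TAt d j).right := by
    simpa only [IsSlotIn, Nat.sub_add_cancel (show 1 ≤ finOf (TAt d i) by omega)] using hslot.2
  rcases right_gapFree_or_type3 (hT1.1 j hj) with h | h
  · have := hTj.finOf_eq_b h
    exact absurd (mem_of_gapsFrom hsortR hposR (N := (TAt d j).right.length)
      (fun x hx => absurd hx (h x)) (by omega) (by omega) (by omega)) hnext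
  · have hlen := List.length_pos_of_mem h.2.1.1
    rcases hslot.eq_min_or_mem_drop hsortR hposR (gapsFrom_length_sub_one h.2.2.1) with h' | h'
    · rw [show finOf (TAt d i) = (TAt d j).b by omega]
      exact hbe
    · have : finOf (TAt d i) - 1 = finOf (TAt d j) := eq_botGet_one_of_mem_drop h'
      omega

theorem even_finOf_of_isSlotIn_S {c : ℕ}
    (hTs : ∀ j, j < μ.length → IsTwoCol (μ.getD j 0) (TAt d j)) (hR : IsRect c d.S)
    (hH : CondH μ d) (hH' : CondH' μ d) (hS : CondS d) (hT1 : CondT1noTR μ d) {i : ℕ}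
    (hi : i < μ.length) (h3 : Type3 (μ.getD i 0) (TAt d i)) {t : ℕ} (ht : t < d.S.cols.length)
    (hslot : IsSlotIn (d.S.cols.getD t []) (finOf (TAt d i) - 1)) : Even (finOf (TAt d i)) := by
  have hf := (hTs i hi).b_lt_finOf h3
  have hcol : d.S.cols.getD t [] ∈ d.S.cols := getD_mem_of_lt ht
  obtain ⟨hsort, hpos⟩ := hR.2.1 _ hcol
  have hlen : finOf (TAt d i) - 1 = (d.S.cols.getD t []).length := by
    rcases hslot.eq_min_or_mem_drop hsort hpos (N := (d.S.cols.getD t []).length)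
      (fun x hx => absurd hx (hS _ hcol x)) with h | h
    · simpa using h
    · simp at h
  have hct : t < c := hR.1 ▸ ht
  -- if `S` were even, the fin of `T_ℓ` would be `b_ℓ ≤ ht(S^L)`, too small to reach `fin(T_i)`
  have hodd : ¬ SEven d.S := by
    intro hev
    have hfin : finOf (TAt d (μ.length - 1)) = (TAt d (μ.length - 1)).b :=
      (hTs _ (by omega)).finOf_eq_b ((right_gapFree_or_type3 (hT1.1 _ (by omega))).resolve_right
        fun h => hT1.2.2 (by omega) h hev)
    have := finOf_mono hTs hH hT1 (show i ≤ μ.length - 1 by omega) (by omega)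
    have := (hH' (by omega)).1 hev
    have := hR.length_SL_le hct
    omega
  have hpar := hR.2.2.2.1 t 0 hct (by omega)
  unfold SEven SL at hodd
  exact Nat.even_iff.mpr (by omega)

theorem even_finOf_of_type3 {k : ℕ} (hd : IsKTuple k μ d) (hH : CondH μ d) (hH' : CondH' μ d)
    (hS : CondS d) (hT1 : CondT1noTR μ d) (hG : CondG d) {i : ℕ} (hi : i < μ.length)
    (h3 : Type3 (μ.getD i 0) (TAt d i)) : Even (finOf (TAt d i)) := by
  obtain ⟨hlen, hTs, hR⟩ := hd
  obtain ⟨F, -, hF⟩ := hG (finOf (TAt d i))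
  have hgap : 2 * i + 1 < (colListOf d).length ∧
      IsGapIn ((colListOf d).getD (2 * i + 1) []) (finOf (TAt d i)) := by
    rw [length_colListOf, colListOf_getD_right d (by omega)]
    exact ⟨by omega, h3.2.1⟩
  have hright := hF ⟨_, hgap⟩
  generalize F ⟨_, hgap⟩ = slot at hright
  obtain ⟨c, hc, hslot⟩ := slot
  dsimp only at hright
  rcases colListOf_cases d hc with ⟨j, hj, rfl, hcol⟩ | ⟨j, hj, rfl, hcol⟩ | ⟨t, ht, -, hcol⟩
  · rw [hcol] at hslot
    exact even_finOf_of_isSlotIn_left hTs hH hT1 (by omega) (by omega) h3 hslot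
  · rw [hcol] at hslot
    exact even_finOf_of_isSlotIn_right hTs hH hT1 (by omega) (by omega) h3 hslot
  · rw [hcol] at hslot
    exact even_finOf_of_isSlotIn_S hTs hR hH hH' hS hT1 hi h3 ht hslot

end Tuple

end OrthoBij

open OrthoBij in
theorem statement14_general (k : ℕ) (μ : List ℕ)
    (d : KTupleData) (hd : IsKTuple k μ d)
    (hH : CondH μ d) (hH' : CondH' μ d) (hS : CondS d)
    (hT1 : CondT1 μ d) (hG : CondG d) :
    ∀ i, i < μ.length → (TAt d i).right ≠ [] →
      Even (finOf (TAt d i)) ∧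
      (i + 1 < μ.length →
        (TAt d (i + 1)).right ≠ [] ∧ finOf (TAt d i) ≤ finOf (TAt d (i + 1))) := by
  obtain ⟨hT1, -⟩ := hT1
  have hTs := hd.2.1
  intro i hi hne
  constructor
  · rcases right_gapFree_or_type3 (hT1.1 i hi) with h | h
    · exact (hTs i hi).finOf_eq_b h ▸ (hTs i hi).2.1
    · exact even_finOf_of_type3 hd hH hH' hS hT1 hG hi h
  · intro hi'
    have hle := finOf_le_finOf_succ hTs hH hT1 hi'
    exact ⟨right_ne_nil_of_finOf_pos ((hTs i hi).finOf_pos hne |>.trans_le hle), hle⟩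

open OrthoBij in
/-- Let `L = (T₁, …, T_ℓ, S)` be a structurally valid tuple satisfying
the explicit conditions (H), (H'), (S), (T1), (T2), (G).  If the right column of `T_i`
is nonempty, then the fin of `T_i` is even; moreover, if `i < ℓ`, the right column of
`T_{i+1}` is also nonempty and `fin(T_i) ≤ fin(T_{i+1})`. -/
theorem statement14 (k : ℕ) (hk : 1 ≤ k) (μ : List ℕ)
    (hμ : IsPartitionL μ) (hμk : μ.length ≤ k)
    (d : KTupleData) (hd : IsKTuple k μ d)
    (hH : CondH μ d) (hH' : CondH' μ d) (hS : CondS d)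
    (hT1 : CondT1 μ d) (hT2 : CondT2 μ d) (hG : CondG d) :
    ∀ i, i < μ.length → (TAt d i).right ≠ [] →
      Even (finOf (TAt d i)) ∧
      (i + 1 < μ.length →
        (TAt d (i + 1)).right ≠ [] ∧ finOf (TAt d i) ≤ finOf (TAt d (i + 1))) :=
  statement14_general k μ d hd hH hH' hS hT1 hG
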